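/- arXiv:2007.15552 — 3 statements merged into one kernel-verified Lean document; each statement's English description precedes it below -/
import Mathlib

section
/- Let T^1 = KR_right(S,A)^1 for a finite semigroup S generated by a finite alphabet A, let D be the Lyndon–Chiswell length function on T^1, and let ℓ = 2·max{h(s) : s ∈ S^1}. The relation ∼ on C = {(k,α) : 0 ≤ k ≤ ℓ, α ∈ T^1} defined by (k,α) ∼ (k',β) iff k = k' and D(α,β) ≥ k is an equivalence relation, and (0,α) ∼ (0,β) for all α, β ∈ T^1. -/
open scoped Classical

namespace KRHolonomy

/-- Green's quasi-order `≤_J` on a monoid: `a ≤_J b` iff `a ∈ M b M`. -/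
def leJ {M : Type*} [Monoid M] (a b : M) : Prop := ∃ x y : M, a = x * b * y

/-- `a <_J b` iff `a ≤_J b` and not `b ≤_J a`. -/
def ltJ {M : Type*} [Monoid M] (a b : M) : Prop := leJ a b ∧ ¬ leJ b a

/-- Green's quasi-order `≤_R` on a monoid: `a ≤_R b` iff `a ∈ b M`. -/
def leR {M : Type*} [Monoid M] (a b : M) : Prop := ∃ x : M, a = b * x

/-- `a <_R b` iff `a ≤_R b` and not `b ≤_R a`. -/
def ltR {M : Type*} [Monoid M] (a b : M) : Prop := leR a b ∧ ¬ leR b a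

/-- Green's quasi-order `≤_L` on a monoid: `a ≤_L b` iff `a ∈ M b`. -/
def leL {M : Type*} [Monoid M] (a b : M) : Prop := ∃ x : M, a = x * b

/-- `a <_L b` iff `a ≤_L b` and not `b ≤_L a`. -/
def ltL {M : Type*} [Monoid M] (a b : M) : Prop := leL a b ∧ ¬ leL b a

/-- The Dedekind height function: `height x` is the largest `k` such that there is a chain
`x₀ >_J x₁ >_J ⋯ >_J x_k = x`. -/
noncomputable def height {M : Type*} [Monoid M] (x : M) : ℕ :=
  sSup {k | ∃ c : ℕ → M, c k = x ∧ ∀ i < k, ltJ (c (i + 1)) (c i)}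

variable {A S : Type*} [Semigroup S]

/-- The edge `(s, a, s·θ(a))` of the right Cayley graph of `(S,A)` is a transition edge:
there is no path in the right Cayley graph from `s·θ(a)` back to `s`. -/
def IsTransitionEdge (θ : FreeMonoid A →* WithOne S) (s : WithOne S) (a : A) : Prop :=
  ¬ ∃ w : FreeMonoid A, s * θ (FreeMonoid.of a) * θ w = s

/-- The (ordered) sequence of transition edges along the path of the right Cayley graph
starting at `s` and reading the word `u`; an edge is recorded as a pair (source, label). -/
noncomputable def transEdgesFrom (θ : FreeMonoid A →* WithOne S) :
    WithOne S → List A → List (WithOne S × A)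
  | _, [] => []
  | s, a :: w =>
      (if IsTransitionEdge θ s a then [(s, a)] else []) ++
        transEdgesFrom θ (s * θ (FreeMonoid.of a)) w

/-- The sequence of transition edges of the path starting at `1` reading `u`. -/
noncomputable def transEdges (θ : FreeMonoid A →* WithOne S) (u : FreeMonoid A) :
    List (WithOne S × A) :=
  transEdgesFrom θ 1 (FreeMonoid.toList u)

/-- The congruence (`τ_r`, together with `(1,1)`) defining the right Karnofsky–Rhodes
expansion: two words of `A^*` represent the same element of `KR_right(S,A)¹` iff they are
both empty or both nonempty, they have the same image in `S¹` and the same sequence of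
transition edges. -/
def KRrel (θ : FreeMonoid A →* WithOne S) (u v : FreeMonoid A) : Prop :=
  (u = 1 ∧ v = 1) ∨
    (u ≠ 1 ∧ v ≠ 1 ∧ θ u = θ v ∧ transEdges θ u = transEdges θ v)

/-- Green's quasi-order `≤_J` on `T¹ = KR_right(S,A)¹`, expressed on word representatives:
`u ≤_J v` iff `u = p v q` holds in `T¹` for some `p, q ∈ T¹`. -/
def leJT (θ : FreeMonoid A →* WithOne S) (u v : FreeMonoid A) : Prop :=
  ∃ p q : FreeMonoid A, KRrel θ u (p * v * q)

/-- `<_J` on `T¹ = KR_right(S,A)¹`, expressed on word representatives. -/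
def ltJT (θ : FreeMonoid A →* WithOne S) (u v : FreeMonoid A) : Prop :=
  leJT θ u v ∧ ¬ leJT θ v u

/-- The Dedekind height function on `T¹ = KR_right(S,A)¹`, expressed on word
representatives: the largest `k` such that there is a chain
`t₀ >_J t₁ >_J ⋯ >_J t_k = t` in `T¹`. -/
noncomputable def heightT (θ : FreeMonoid A →* WithOne S) (u : FreeMonoid A) : ℕ :=
  sSup {k | ∃ c : ℕ → FreeMonoid A, KRrel θ (c k) u ∧ ∀ i < k, ltJT θ (c (i + 1)) (c i)}

/-- `ℓ = 2 · max { h(s) : s ∈ S¹ }`. -/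
noncomputable def ell (S : Type*) [Semigroup S] : ℕ :=
  2 * sSup (Set.range fun s : WithOne S => height s)

/-- `ξ(u,v)`: the largest `i` (with `0 ≤ i ≤ m`, `m` the number of transition edges of `u`)
such that the first `i` transition edges of `u` and of `v` agree. -/
noncomputable def xi (θ : FreeMonoid A →* WithOne S) (u v : FreeMonoid A) : ℕ :=
  sSup {i | i ≤ (transEdges θ u).length ∧
    (transEdges θ u).take i = (transEdges θ v).take i}

/-- The endpoint of an edge `(s, a)` of the right Cayley graph, namely `s·θ(a)`. -/
def edgeEnd (θ : FreeMonoid A →* WithOne S) (e : WithOne S × A) : WithOne S :=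
  e.1 * θ (FreeMonoid.of e.2)

/-- The Lyndon–Chiswell length function `D` on `T¹ = KR_right(S,A)¹`, expressed on word
representatives.  With `k = ξ(u,v)` (and indexing the transition edges from `1` as in the
paper, so that `E_k` sits at list index `k-1`):
`D(u,v) = ℓ` if `u = v` in `T¹`; `D(u,v) = 0` if `u ≠ v` in `T¹` and `k = 0`;
`D(u,v) = 2·h(end(E_k))` if `k > 0`, `E_{k+1}` and `E'_{k+1}` both exist and have the same
endpoint; and `D(u,v) = 2·h(end(E_k)) - 1` in all remaining cases. -/
noncomputable def lcD (θ : FreeMonoid A →* WithOne S) (u v : FreeMonoid A) : ℕ :=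
  if KRrel θ u v then ell S
  else if xi θ u v = 0 then 0
  else
    let k := xi θ u v
    let base := (transEdges θ u)[k - 1]?.elim 0 fun e => height (edgeEnd θ e)
    if ∃ e e', (transEdges θ u)[k]? = some e ∧ (transEdges θ v)[k]? = some e' ∧
        edgeEnd θ e = edgeEnd θ e'
    then 2 * base
    else 2 * base - 1

/-- The relation `∼` on `C = {(k,α) : 0 ≤ k ≤ ℓ, α ∈ T¹}`:
`(k,α) ∼ (k',β)` iff `k = k'` and `D(α,β) ≥ k`. -/
def simRel (θ : FreeMonoid A →* WithOne S)
    (p q : {p : ℕ × FreeMonoid A // p.1 ≤ ell S}) : Prop :=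
  p.val.1 = q.val.1 ∧ lcD θ p.val.2 q.val.2 ≥ p.val.1

/-- The vertex set of the Chiswell tree: `∼`-classes `[k,α]`. -/
def CVert (θ : FreeMonoid A →* WithOne S) : Type _ := Quot (simRel θ)

/-- The edge relation of the Chiswell graph: the edges are `[k,α] — [k+1,α]`
for `0 ≤ k < ℓ` and `α ∈ T¹`. -/
def edgeRel (θ : FreeMonoid A →* WithOne S) (v w : CVert θ) : Prop :=
  ∃ (k : ℕ) (α : FreeMonoid A) (hk : k + 1 ≤ ell S),
    v = Quot.mk (simRel θ) ⟨(k, α), Nat.le_of_succ_le hk⟩ ∧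
    w = Quot.mk (simRel θ) ⟨(k + 1, α), hk⟩

/-- The Chiswell graph `𝒞`. -/
def CGraph (θ : FreeMonoid A →* WithOne S) : SimpleGraph (CVert θ) :=
  SimpleGraph.fromRel (edgeRel θ)

/-- The depth function of the Chiswell tree: `δ([k,α]) = k`. -/
def depth (θ : FreeMonoid A →* WithOne S) : CVert θ → ℕ :=
  Quot.lift (fun p => p.val.1) (fun _ _ h => h.1)

section Aux

/-! ### Auxiliary lemmas for `simRel_equivalence` -/

lemma exists_idem_pow {M : Type*} [Monoid M] [Finite M] (x : M) :
    ∃ n, 1 ≤ n ∧ x ^ n * x ^ n = x ^ n := by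
  obtain ⟨i, j, hne, hij⟩ := Finite.exists_ne_map_eq_of_infinite (fun n : ℕ => x ^ n)
  wlog hlt : i < j generalizing i j
  · exact this j i hne.symm hij.symm (by omega)
  have hij' : x ^ i = x ^ j := hij
  set d := j - i with hd
  have hd1 : 1 ≤ d := by omega
  have key : ∀ m, i ≤ m → ∀ k, x ^ (m + k * d) = x ^ m := by
    intro m hm k
    induction k with
    | zero => simp
    | succ k ih =>
      have h1 : x ^ (m + d) = x ^ m := by
        have e1 : x ^ m = x ^ (m - i) * x ^ i := by rw [← pow_add]; congr 1; omega
        have e2 : x ^ (m + d) = x ^ (m - i) * x ^ j := by rw [← pow_add]; congr 1; omega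
        rw [e2, ← hij', ← e1]
      calc x ^ (m + (k + 1) * d) = x ^ (m + k * d) * x ^ d := by rw [← pow_add]; congr 1; ring
        _ = x ^ m * x ^ d := by rw [ih]
        _ = x ^ (m + d) := by rw [← pow_add]
        _ = x ^ m := h1
  refine ⟨d * (i + 1), by nlinarith, ?_⟩
  rw [← pow_add]
  calc x ^ (d * (i + 1) + d * (i + 1)) = x ^ (d * (i + 1) + (i + 1) * d) := by ring_nf
    _ = x ^ (d * (i + 1)) := key (d * (i + 1)) (by nlinarith) (i + 1)

lemma iterate_sandwich {M : Type*} [Monoid M] {b x z : M} (h : b = x * b * z) :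
    ∀ n, b = x ^ n * b * z ^ n := by
  intro n
  induction n with
  | zero => simp
  | succ n ih =>
    calc b = x * b * z := h
      _ = x * (x ^ n * b * z ^ n) * z := by rw [← ih]
      _ = (x * x ^ n) * b * (z ^ n * z) := by simp only [mul_assoc]
      _ = x ^ (n + 1) * b * z ^ (n + 1) := by rw [pow_succ' x n, pow_succ z n]

lemma ltJ_irrefl {M : Type*} [Monoid M] (a : M) : ¬ ltJ a a :=
  fun h => h.2 ⟨1, 1, by simp⟩

lemma ltJ_transitive {M : Type*} [Monoid M] {a b c : M} (h1 : ltJ a b) (h2 : ltJ b c) :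
    ltJ a c := by
  obtain ⟨⟨x, y, hxy⟩, h1'⟩ := h1
  obtain ⟨⟨x', y', hxy'⟩, h2'⟩ := h2
  refine ⟨⟨x * x', y' * y, by rw [hxy, hxy']; simp only [mul_assoc]⟩, ?_⟩
  rintro ⟨p, q, hpq⟩
  exact h2' ⟨p * x, y * q, by rw [hpq, hxy]; simp only [mul_assoc]⟩

lemma chain_ltJ {M : Type*} [Monoid M] {c : ℕ → M} {k : ℕ}
    (h : ∀ i < k, ltJ (c (i + 1)) (c i)) :
    ∀ i j, i < j → j ≤ k → ltJ (c j) (c i) := by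
  intro i j hij hjk
  induction j with
  | zero => omega
  | succ j ih =>
    rcases Nat.lt_or_ge i j with h' | h'
    · exact ltJ_transitive (h j (by omega)) (ih h' (by omega))
    · have hi : i = j := by omega
      subst hi
      exact h i (by omega)

lemma heightSet_bddAbove {M : Type*} [Monoid M] [Finite M] (x : M) :
    BddAbove {k | ∃ c : ℕ → M, c k = x ∧ ∀ i < k, ltJ (c (i + 1)) (c i)} := by
  refine ⟨Nat.card M, fun k hk => ?_⟩
  obtain ⟨c, hck, hc⟩ := hk
  by_contra hlt
  push_neg at hlt
  have hinj : Function.Injective (fun i : Fin (k + 1) => c i) := by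
    intro i j hij
    have hij' : c i = c j := hij
    rcases lt_trichotomy (i : ℕ) (j : ℕ) with h | h | h
    · exfalso
      have := chain_ltJ hc i j h (Nat.lt_succ_iff.mp j.isLt)
      rw [hij'] at this
      exact ltJ_irrefl _ this
    · exact Fin.ext h
    · exfalso
      have := chain_ltJ hc j i h (Nat.lt_succ_iff.mp i.isLt)
      rw [hij'] at this
      exact ltJ_irrefl _ this
  have hcard := Nat.card_le_card_of_injective _ hinj
  simp only [Nat.card_eq_fintype_card, Fintype.card_fin] at hcard
  omega

lemma heightSet_nonempty {M : Type*} [Monoid M] (x : M) :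
    Set.Nonempty {k | ∃ c : ℕ → M, c k = x ∧ ∀ i < k, ltJ (c (i + 1)) (c i)} :=
  ⟨0, fun _ => x, rfl, by omega⟩

lemma height_spec {M : Type*} [Monoid M] [Finite M] (x : M) :
    ∃ c : ℕ → M, c (height x) = x ∧ ∀ i < height x, ltJ (c (i + 1)) (c i) :=
  Nat.sSup_mem (heightSet_nonempty x) (heightSet_bddAbove x)

lemma height_lt_of_ltJ {M : Type*} [Monoid M] [Finite M] {a b : M} (h : ltJ a b) :
    height b < height a := by
  obtain ⟨c, hcb, hc⟩ := height_spec b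
  have hmem : height b + 1 ∈ {k | ∃ c : ℕ → M, c k = a ∧ ∀ i < k, ltJ (c (i + 1)) (c i)} := by
    refine ⟨fun i => if i ≤ height b then c i else a, ?_, ?_⟩
    · simp
    · intro i hi
      dsimp only
      rcases Nat.lt_or_ge i (height b) with h' | h'
      · rw [if_pos (by omega), if_pos (by omega)]
        exact hc i h'
      · have hieq : i = height b := by omega
        subst hieq
        rw [if_neg (by omega), if_pos le_rfl, hcb]
        exact h
  have hle : height b + 1 ≤ height a := le_csSup (heightSet_bddAbove a) hmem
  omega

end Aux

section Aux2

variable {A S : Type*} [Semigroup S]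

instance withOne_finite {S' : Type*} [Finite S'] : Finite (WithOne S') := by
  haveI := Fintype.ofFinite S'
  exact @Finite.of_fintype _ (inferInstanceAs (Fintype (Option S')))

lemma theta_surj (θ : FreeMonoid A →* WithOne S)
    (hgen : ∀ s : S, ∃ u : FreeMonoid A, θ u = (s : WithOne S)) :
    ∀ t : WithOne S, ∃ w : FreeMonoid A, θ w = t := by
  intro t
  rcases t with _ | s
  · exact ⟨1, map_one θ⟩
  · exact hgen s

lemma ltJ_of_transEdge [Finite S] (θ : FreeMonoid A →* WithOne S)
    (hsur : ∀ t : WithOne S, ∃ w : FreeMonoid A, θ w = t)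
    {s : WithOne S} {c : A} (ht : IsTransitionEdge θ s c)
    {b : WithOne S} {p : FreeMonoid A} (hs : s = b * θ p) :
    ltJ (s * θ (FreeMonoid.of c)) b := by
  constructor
  · exact ⟨1, θ p * θ (FreeMonoid.of c), by rw [hs, one_mul, mul_assoc]⟩
  · rintro ⟨x, y, hb⟩
    have hb' : b = x * b * (θ p * θ (FreeMonoid.of c) * y) := by
      conv_lhs => rw [hb, hs]
      simp only [mul_assoc]
    obtain ⟨n, hn1, hidem⟩ := exists_idem_pow x
    set z := θ p * θ (FreeMonoid.of c) * y with hz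
    have hiter := iterate_sandwich hb' n
    have heb : x ^ n * b = b := by
      calc x ^ n * b = x ^ n * (x ^ n * b * z ^ n) := by rw [← hiter]
        _ = (x ^ n * x ^ n) * b * z ^ n := by simp only [mul_assoc]
        _ = x ^ n * b * z ^ n := by rw [hidem]
        _ = b := by rw [← hiter]
    have hbz : b = b * z ^ n := by
      calc b = x ^ n * b * z ^ n := hiter
        _ = (x ^ n * b) * z ^ n := rfl
        _ = b * z ^ n := by rw [heb]
    obtain ⟨w, hw⟩ := hsur (y * z ^ (n - 1) * θ p)
    apply ht
    refine ⟨w, ?_⟩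
    rw [hw, hs]
    have hzn : z ^ n = z * z ^ (n - 1) := by
      conv_lhs => rw [show n = 1 + (n - 1) by omega]
      rw [pow_add, pow_one]
    have hmain : b * θ p * θ (FreeMonoid.of c) * (y * z ^ (n - 1) * θ p)
        = (b * z ^ n) * θ p := by
      rw [hzn, hz]
      simp only [mul_assoc]
    rw [hmain, ← hbz]

lemma transEdgesFrom_mem (θ : FreeMonoid A →* WithOne S) :
    ∀ (l : List A) (s : WithOne S) (e : WithOne S × A),
      e ∈ transEdgesFrom θ s l →
      IsTransitionEdge θ e.1 e.2 ∧ ∃ p : FreeMonoid A, e.1 = s * θ p := by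
  intro l
  induction l with
  | nil => intro s e h; rw [transEdgesFrom] at h; simp at h
  | cons a w ih =>
    intro s e h
    rw [transEdgesFrom] at h
    by_cases hT : IsTransitionEdge θ s a
    · rw [if_pos hT] at h
      rcases List.mem_append.mp h with h1 | h2
      · have he : e = (s, a) := by simpa using h1
        subst he
        exact ⟨hT, 1, by simp⟩
      · obtain ⟨h1, p, hp⟩ := ih (s * θ (FreeMonoid.of a)) e h2
        exact ⟨h1, FreeMonoid.of a * p, by rw [hp, map_mul, mul_assoc]⟩
    · rw [if_neg hT, List.nil_append] at h
      obtain ⟨h1, p, hp⟩ := ih (s * θ (FreeMonoid.of a)) e h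
      exact ⟨h1, FreeMonoid.of a * p, by rw [hp, map_mul, mul_assoc]⟩

lemma transEdgesFrom_chain (θ : FreeMonoid A →* WithOne S) :
    ∀ (l : List A) (s : WithOne S),
      List.Chain' (fun e e' => ∃ p : FreeMonoid A, e'.1 = edgeEnd θ e * θ p)
        (transEdgesFrom θ s l) := by
  intro l
  induction l with
  | nil => intro s; rw [transEdgesFrom]; exact List.isChain_nil
  | cons a w ih =>
    intro s
    rw [transEdgesFrom]
    by_cases hT : IsTransitionEdge θ s a
    · rw [if_pos hT, List.singleton_append]
      refine List.isChain_cons.mpr ⟨?_, ih _⟩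
      intro e' he'
      have hmem : e' ∈ transEdgesFrom θ (s * θ (FreeMonoid.of a)) w :=
        List.mem_of_mem_head? he'
      obtain ⟨_, p, hp⟩ := transEdgesFrom_mem θ w _ e' hmem
      exact ⟨p, by rw [hp]; rfl⟩
    · rw [if_neg hT, List.nil_append]
      exact ih _

lemma height_strict_aux [Finite S] (θ : FreeMonoid A →* WithOne S)
    (hsur : ∀ t : WithOne S, ∃ w : FreeMonoid A, θ w = t)
    (l : List A) (s : WithOne S) :
    ∀ i j (hij : i < j) (hj : j < (transEdgesFrom θ s l).length),
      height (edgeEnd θ ((transEdgesFrom θ s l)[i]'(by omega))) <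
        height (edgeEnd θ ((transEdgesFrom θ s l)[j]'hj)) := by
  have step : ∀ i (h : i + 1 < (transEdgesFrom θ s l).length),
      ltJ (edgeEnd θ ((transEdgesFrom θ s l)[i + 1]'h))
          (edgeEnd θ ((transEdgesFrom θ s l)[i]'(by omega))) := by
    intro i h
    obtain ⟨p, hp⟩ := List.isChain_iff_getElem.mp (transEdgesFrom_chain θ l s) i (by omega)
    have hT := (transEdgesFrom_mem θ l s _ (List.getElem_mem h)).1
    exact ltJ_of_transEdge θ hsur hT hp
  intro i j hij hj
  induction j with
  | zero => omega
  | succ j ih =>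
    rcases Nat.lt_or_ge i j with h' | h'
    · exact lt_trans (ih h' (by omega)) (height_lt_of_ltJ (step j hj))
    · have hi : i = j := by omega
      subst hi
      exact height_lt_of_ltJ (step i hj)

lemma height_strict [Finite S] (θ : FreeMonoid A →* WithOne S)
    (hsur : ∀ t : WithOne S, ∃ w : FreeMonoid A, θ w = t)
    (u : FreeMonoid A) {i j : ℕ} (hij : i < j) (hj : j < (transEdges θ u).length) :
    height (edgeEnd θ ((transEdges θ u)[i]'(by omega))) <
      height (edgeEnd θ ((transEdges θ u)[j]'hj)) :=
  height_strict_aux θ hsur (FreeMonoid.toList u) 1 i j hij hj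

end Aux2

section Aux3

variable {A S : Type*} [Semigroup S]

lemma len_of_take_eq {α : Type*} {l1 l2 : List α} {i : ℕ} (h1 : i ≤ l1.length)
    (h : l1.take i = l2.take i) : i ≤ l2.length := by
  have := congrArg List.length h
  simp only [List.length_take] at this
  omega

lemma getElem?_of_take_eq {α : Type*} {l1 l2 : List α} {i j : ℕ}
    (h : l1.take i = l2.take i) (hj : j < i) : l1[j]? = l2[j]? := by
  have h1 : (l1.take i)[j]? = l1[j]? := List.getElem?_take_of_lt hj
  have h2 : (l2.take i)[j]? = l2[j]? := List.getElem?_take_of_lt hj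
  rw [← h1, ← h2, h]

lemma xi_set_bdd (θ : FreeMonoid A →* WithOne S) (u v : FreeMonoid A) :
    BddAbove {i | i ≤ (transEdges θ u).length ∧
      (transEdges θ u).take i = (transEdges θ v).take i} :=
  ⟨(transEdges θ u).length, fun _ hi => hi.1⟩

lemma xi_mem (θ : FreeMonoid A →* WithOne S) (u v : FreeMonoid A) :
    xi θ u v ≤ (transEdges θ u).length ∧
      (transEdges θ u).take (xi θ u v) = (transEdges θ v).take (xi θ u v) :=
  Nat.sSup_mem ⟨0, by simp⟩ (xi_set_bdd θ u v)

lemma le_xi {θ : FreeMonoid A →* WithOne S} {u v : FreeMonoid A} {i : ℕ}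
    (h1 : i ≤ (transEdges θ u).length)
    (h2 : (transEdges θ u).take i = (transEdges θ v).take i) : i ≤ xi θ u v :=
  le_csSup (xi_set_bdd θ u v) ⟨h1, h2⟩

lemma xi_symm (θ : FreeMonoid A →* WithOne S) (u v : FreeMonoid A) :
    xi θ u v = xi θ v u := by
  unfold xi
  congr 1
  ext i
  constructor
  · rintro ⟨h1, h2⟩; exact ⟨len_of_take_eq h1 h2, h2.symm⟩
  · rintro ⟨h1, h2⟩; exact ⟨len_of_take_eq h1 h2, h2.symm⟩

lemma KRrel_refl (θ : FreeMonoid A →* WithOne S) (u : FreeMonoid A) : KRrel θ u u := by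
  by_cases h : u = 1
  · exact Or.inl ⟨h, h⟩
  · exact Or.inr ⟨h, h, rfl, rfl⟩

lemma KRrel_symm {θ : FreeMonoid A →* WithOne S} {u v : FreeMonoid A}
    (h : KRrel θ u v) : KRrel θ v u := by
  rcases h with ⟨h1, h2⟩ | ⟨h1, h2, h3, h4⟩
  · exact Or.inl ⟨h2, h1⟩
  · exact Or.inr ⟨h2, h1, h3.symm, h4.symm⟩

lemma KRrel_iff_left {θ : FreeMonoid A →* WithOne S} {u v : FreeMonoid A}
    (h : KRrel θ u v) (w : FreeMonoid A) : KRrel θ u w ↔ KRrel θ v w := by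
  rcases h with ⟨h1, h2⟩ | ⟨h1, h2, h3, h4⟩
  · rw [h1, h2]
  · constructor
    · rintro (⟨hu, hw⟩ | ⟨hu, hw, h5, h6⟩)
      · exact absurd hu h1
      · exact Or.inr ⟨h2, hw, h3.symm.trans h5, h4.symm.trans h6⟩
    · rintro (⟨hv, hw⟩ | ⟨hv, hw, h5, h6⟩)
      · exact absurd hv h2
      · exact Or.inr ⟨h1, hw, h3.trans h5, h4.trans h6⟩

lemma KRrel_theta {θ : FreeMonoid A →* WithOne S} {u v : FreeMonoid A}
    (h : KRrel θ u v) : θ u = θ v ∧ transEdges θ u = transEdges θ v := by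
  rcases h with ⟨h1, h2⟩ | ⟨_, _, h3, h4⟩
  · rw [h1, h2]; exact ⟨rfl, rfl⟩
  · exact ⟨h3, h4⟩

/-- The agreement condition in the definition of `lcD`. -/
def condE (θ : FreeMonoid A →* WithOne S) (u v : FreeMonoid A) : Prop :=
  ∃ e e', (transEdges θ u)[xi θ u v]? = some e ∧ (transEdges θ v)[xi θ u v]? = some e' ∧
    edgeEnd θ e = edgeEnd θ e'

/-- The base height in the definition of `lcD`. -/
noncomputable def baseH (θ : FreeMonoid A →* WithOne S) (u v : FreeMonoid A) : ℕ :=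
  ((transEdges θ u)[xi θ u v - 1]?).elim 0 fun e => height (edgeEnd θ e)

lemma lcD_of_not {θ : FreeMonoid A →* WithOne S} {u v : FreeMonoid A}
    (hK : ¬ KRrel θ u v) (h0 : xi θ u v ≠ 0) :
    lcD θ u v = if condE θ u v then 2 * baseH θ u v else 2 * baseH θ u v - 1 := by
  unfold lcD condE baseH
  rw [if_neg hK, if_neg h0]

lemma lcD_self (θ : FreeMonoid A →* WithOne S) (u : FreeMonoid A) :
    lcD θ u u = ell S := by
  unfold lcD
  rw [if_pos (KRrel_refl θ u)]

lemma lcD_of_KRrel {θ : FreeMonoid A →* WithOne S} {u v : FreeMonoid A}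
    (h : KRrel θ u v) : lcD θ u v = ell S := by
  unfold lcD
  rw [if_pos h]

lemma lcD_symm (θ : FreeMonoid A →* WithOne S) (u v : FreeMonoid A) :
    lcD θ u v = lcD θ v u := by
  by_cases hK : KRrel θ u v
  · rw [lcD_of_KRrel hK, lcD_of_KRrel (KRrel_symm hK)]
  · have hK' : ¬ KRrel θ v u := fun h => hK (KRrel_symm h)
    have hxs : xi θ v u = xi θ u v := (xi_symm θ u v).symm
    by_cases h0 : xi θ u v = 0
    · unfold lcD
      rw [if_neg hK, if_neg hK', if_pos h0, if_pos (hxs.trans h0)]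
    · have h0' : xi θ v u ≠ 0 := fun h => h0 (hxs ▸ h)
      rw [lcD_of_not hK h0, lcD_of_not hK' h0']
      have hm := xi_mem θ u v
      have hbase : baseH θ u v = baseH θ v u := by
        unfold baseH
        rw [hxs, getElem?_of_take_eq hm.2 (by omega)]
      have hcond : condE θ u v ↔ condE θ v u := by
        unfold condE
        rw [hxs]
        constructor <;> rintro ⟨e, e', h1, h2, h3⟩ <;> exact ⟨e', e, h2, h1, h3.symm⟩
      rw [hbase, if_congr hcond rfl rfl]

lemma lcD_congr_left {θ : FreeMonoid A →* WithOne S} {u v : FreeMonoid A}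
    (h : KRrel θ u v) (w : FreeMonoid A) : lcD θ u w = lcD θ v w := by
  have h4 := (KRrel_theta h).2
  have hx : xi θ u w = xi θ v w := by unfold xi; rw [h4]
  simp only [lcD]
  rw [hx, h4]
  exact if_congr (KRrel_iff_left h w) rfl rfl

lemma lcD_congr_right {θ : FreeMonoid A →* WithOne S} {v w : FreeMonoid A}
    (h : KRrel θ v w) (u : FreeMonoid A) : lcD θ u v = lcD θ u w := by
  rw [lcD_symm θ u v, lcD_symm θ u w]
  exact lcD_congr_left h u

lemma elim_getElem (θ : FreeMonoid A →* WithOne S) {l : List (WithOne S × A)} {i : ℕ}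
    (h : i < l.length) :
    (l[i]?).elim 0 (fun e => height (edgeEnd θ e)) = height (edgeEnd θ (l[i]'h)) := by
  rw [List.getElem?_eq_getElem h]
  rfl

end Aux3

section Aux4

variable {A S : Type*} [Semigroup S]

lemma lcD_core [Finite S] (θ : FreeMonoid A →* WithOne S)
    (hsur : ∀ t : WithOne S, ∃ w' : FreeMonoid A, θ w' = t)
    {u v w : FreeMonoid A} {k : ℕ}
    (hKuv : ¬ KRrel θ u v) (hKvw : ¬ KRrel θ v w) (hKuw : ¬ KRrel θ u w)
    (hm1 : 1 ≤ xi θ u v) (hmn : xi θ u v ≤ xi θ v w)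
    (h1 : k ≤ lcD θ u v) (h2 : k ≤ lcD θ v w) :
    k ≤ lcD θ u w := by
  obtain ⟨hmlen, hmtake⟩ := xi_mem θ u v
  obtain ⟨hnlen, hntake⟩ := xi_mem θ v w
  obtain ⟨hKlen, hKtake⟩ := xi_mem θ u w
  have hmlenv : xi θ u v ≤ (transEdges θ v).length := len_of_take_eq hmlen hmtake
  have hnlenw : xi θ v w ≤ (transEdges θ w).length := len_of_take_eq hnlen hntake
  have hmvw : (transEdges θ v).take (xi θ u v) = (transEdges θ w).take (xi θ u v) := by
    have h := congrArg (List.take (xi θ u v)) hntake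
    rwa [List.take_take, List.take_take, Nat.min_eq_left hmn] at h
  have hmuw : (transEdges θ u).take (xi θ u v) = (transEdges θ w).take (xi θ u v) :=
    hmtake.trans hmvw
  have hKge : xi θ u v ≤ xi θ u w := le_xi hmlen hmuw
  have hm0 : xi θ u v ≠ 0 := by omega
  have hn0 : xi θ v w ≠ 0 := by omega
  have hK0 : xi θ u w ≠ 0 := by omega
  have hmlt : xi θ u v - 1 < (transEdges θ u).length := by omega
  have hbuv : baseH θ u v = height (edgeEnd θ ((transEdges θ u)[xi θ u v - 1]'hmlt)) :=
    elim_getElem θ hmlt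
  have hDuv := lcD_of_not hKuv hm0
  have hk2 : k ≤ 2 * baseH θ u v := by
    rw [hDuv] at h1; split at h1 <;> omega
  rcases eq_or_lt_of_le hmn with heq | hlt
  · -- m = n
    have hbvw : baseH θ v w = baseH θ u v := by
      unfold baseH
      rw [← heq, getElem?_of_take_eq hmtake.symm (by omega)]
    rcases eq_or_lt_of_le hKge with heqK | hltK
    · -- K = m
      have hbuw : baseH θ u w = baseH θ u v := by
        unfold baseH; rw [← heqK]
      by_cases hc : condE θ u w
      · rw [lcD_of_not hKuw hK0, if_pos hc, hbuw]; exact hk2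
      · have hnc : ¬ condE θ u v ∨ ¬ condE θ v w := by
          by_contra hcon
          push_neg at hcon
          obtain ⟨⟨e, e', he1, he2, he3⟩, ⟨f, f', hf1, hf2, hf3⟩⟩ := hcon
          rw [← heq] at hf1 hf2
          rw [he2] at hf1
          have hef : e' = f := Option.some_inj.mp hf1
          exact hc ⟨e, f', by rw [← heqK]; exact he1, by rw [← heqK]; exact hf2,
            he3.trans (show edgeEnd θ e' = edgeEnd θ f' by rw [hef]; exact hf3)⟩
        have hval : k ≤ 2 * baseH θ u v - 1 := by
          rcases hnc with h | h
          · rw [hDuv, if_neg h] at h1; exact h1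
          · rw [lcD_of_not hKvw hn0, if_neg h, hbvw] at h2; exact h2
        rw [lcD_of_not hKuw hK0, if_neg hc, hbuw]
        exact hval
    · -- m < K
      have hKlt : xi θ u w - 1 < (transEdges θ u).length := by omega
      have hbuw : baseH θ u w = height (edgeEnd θ ((transEdges θ u)[xi θ u w - 1]'hKlt)) :=
        elim_getElem θ hKlt
      have hlt2 : height (edgeEnd θ ((transEdges θ u)[xi θ u v - 1]'hmlt)) <
          height (edgeEnd θ ((transEdges θ u)[xi θ u w - 1]'hKlt)) :=
        height_strict θ hsur u (by omega) hKlt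
      rw [lcD_of_not hKuw hK0]
      rw [hbuv] at hk2
      rw [hbuw]
      split <;> omega
  · -- m < n
    have hvw_at : (transEdges θ v)[xi θ u v]? = (transEdges θ w)[xi θ u v]? :=
      getElem?_of_take_eq hntake hlt
    have hKeq : xi θ u w = xi θ u v := by
      refine le_antisymm ?_ hKge
      by_contra hgt
      push_neg at hgt
      have hs1 : xi θ u v + 1 ≤ (transEdges θ u).length := by omega
      have htakeuw : (transEdges θ u).take (xi θ u v + 1)
          = (transEdges θ w).take (xi θ u v + 1) := by
        have h := congrArg (List.take (xi θ u v + 1)) hKtake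
        rwa [List.take_take, List.take_take, Nat.min_eq_left (by omega)] at h
      have huw_at : (transEdges θ u)[xi θ u v]? = (transEdges θ w)[xi θ u v]? :=
        getElem?_of_take_eq htakeuw (by omega)
      have huv_at : (transEdges θ u)[xi θ u v]? = (transEdges θ v)[xi θ u v]? :=
        huw_at.trans hvw_at.symm
      have htakeuv : (transEdges θ u).take (xi θ u v + 1)
          = (transEdges θ v).take (xi θ u v + 1) := by
        rw [List.take_succ, List.take_succ, hmtake, huv_at]
      have := le_xi hs1 htakeuv
      omega
    have hbuw : baseH θ u w = baseH θ u v := by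
      unfold baseH; rw [hKeq]
    by_cases hc : condE θ u w
    · rw [lcD_of_not hKuw hK0, if_pos hc, hbuw]; exact hk2
    · have hncuv : ¬ condE θ u v := by
        rintro ⟨e, e', he1, he2, he3⟩
        exact hc ⟨e, e', by rw [hKeq]; exact he1, by rw [hKeq, ← hvw_at]; exact he2, he3⟩
      rw [lcD_of_not hKuw hK0, if_neg hc, hbuw]
      rw [hDuv, if_neg hncuv] at h1
      exact h1

lemma lcD_ge_trans [Finite S] (θ : FreeMonoid A →* WithOne S)
    (hsur : ∀ t : WithOne S, ∃ w' : FreeMonoid A, θ w' = t)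
    {u v w : FreeMonoid A} {k : ℕ} (hk : k ≤ ell S)
    (h1 : k ≤ lcD θ u v) (h2 : k ≤ lcD θ v w) : k ≤ lcD θ u w := by
  by_cases hKuv : KRrel θ u v
  · rw [lcD_congr_left hKuv w]; exact h2
  · by_cases hKvw : KRrel θ v w
    · rw [← lcD_congr_right hKvw u]; exact h1
    · by_cases hKuw : KRrel θ u w
      · rw [lcD_of_KRrel hKuw]; exact hk
      · rcases Nat.eq_zero_or_pos k with hk0 | hkpos
        · omega
        · have hm0 : xi θ u v ≠ 0 := by
            intro h0
            unfold lcD at h1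
            rw [if_neg hKuv, if_pos h0] at h1
            omega
          have hn0 : xi θ v w ≠ 0 := by
            intro h0
            unfold lcD at h2
            rw [if_neg hKvw, if_pos h0] at h2
            omega
          rcases le_total (xi θ u v) (xi θ v w) with hle | hle
          · exact lcD_core θ hsur hKuv hKvw hKuw (by omega) hle h1 h2
          · have h1' : k ≤ lcD θ w v := by rw [← lcD_symm]; exact h2
            have h2' : k ≤ lcD θ v u := by rw [← lcD_symm]; exact h1
            have hKwv : ¬ KRrel θ w v := fun h => hKvw (KRrel_symm h)
            have hKvu : ¬ KRrel θ v u := fun h => hKuv (KRrel_symm h)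
            have hKwu : ¬ KRrel θ w u := fun h => hKuw (KRrel_symm h)
            have hres := lcD_core θ hsur hKwv hKvu hKwu
              (by rw [xi_symm θ w v]; omega)
              (by rw [xi_symm θ w v, xi_symm θ v u]; exact hle) h1' h2'
            rw [lcD_symm θ u w]
            exact hres

end Aux4

end KRHolonomy

open KRHolonomy in
/-- The relation `∼` on `C = {(k,α) : 0 ≤ k ≤ ℓ, α ∈ T¹}` defined by
`(k,α) ∼ (k',β)` iff `k = k'` and `D(α,β) ≥ k` is an equivalence relation, and
`(0,α) ∼ (0,β)` for all `α, β ∈ T¹`. -/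
theorem simRel_equivalence {A S : Type*} [Finite A] [Semigroup S] [Finite S]
    (θ : FreeMonoid A →* WithOne S)
    (hgen : ∀ s : S, ∃ u : FreeMonoid A, θ u = (s : WithOne S))
    (hproper : ∀ u : FreeMonoid A, θ u = 1 → u = 1) :
    Equivalence (simRel θ) ∧
      ∀ α β : FreeMonoid A,
        simRel θ ⟨(0, α), Nat.zero_le _⟩ ⟨(0, β), Nat.zero_le _⟩ := by
  have hsur : ∀ t : WithOne S, ∃ w : FreeMonoid A, θ w = t := theta_surj θ hgen
  refine ⟨⟨?_, ?_, ?_⟩, ?_⟩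
  · rintro ⟨⟨k, u⟩, hku⟩
    refine ⟨rfl, ?_⟩
    show k ≤ lcD θ u u
    rw [lcD_self]
    exact hku
  · rintro ⟨⟨k, u⟩, hku⟩ ⟨⟨k', v⟩, hkv⟩ ⟨h1, h2⟩
    dsimp only at h1 h2
    subst h1
    refine ⟨rfl, ?_⟩
    show k ≤ lcD θ v u
    rw [lcD_symm θ v u]
    exact h2
  · rintro ⟨⟨k, u⟩, hku⟩ ⟨⟨k', v⟩, hkv⟩ ⟨⟨k'', w⟩, hkw⟩ ⟨h1, h2⟩ ⟨h3, h4⟩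
    dsimp only at h1 h2 h3 h4
    subst h1
    subst h3
    refine ⟨rfl, ?_⟩
    show k ≤ lcD θ u w
    exact lcD_ge_trans θ hsur hku h2 h4
  · intro α β
    exact ⟨rfl, Nat.zero_le _⟩
end

section
/- Let T^1 = KR_right(S,A)^1 for a finite semigroup S generated by a finite alphabet A, and let 𝒞 be the Chiswell graph built from the Lyndon–Chiswell length function D on T^1. Then (𝒞, [0,1]) is a rooted tree: 𝒞 is connected and admits no cycles. -/
/-!
Because `(k,α) ∼ (k,β)` means `D(α,β) ≥ k ≥ k - 1`, the map `[k,α] ↦ [k-1,α]` is well defined on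
`∼`-classes, and every edge of `𝒞` joins a vertex to its parent, one level below it.
Descending along parents joins every vertex to a vertex `[0,α]`, and all of these are the root
`[0,1]`. A cycle is impossible: both neighbours on the cycle of a vertex of maximal depth would be
its parent, so the cycle would immediately backtrack.
-/

open scoped Classical

namespace SimpleGraph

variable {V : Type*} {G : SimpleGraph V}

theorem isAcyclic_of_adj_imp_eq_parent (d : V → ℕ) (parent : V → V)
    (hparent : ∀ ⦃v w⦄, G.Adj v w → d v ≤ d w → v = parent w) : G.IsAcyclic := by
  intro u c hc
  obtain ⟨m, hmc, hmax⟩ := c.support.toFinset.exists_max_image d ⟨u, by simp⟩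
  have hm : m ∈ c.support := List.mem_toFinset.1 hmc
  have hmax' : ∀ x ∈ (c.rotate m hm).support, d x ≤ d m := fun x hx =>
    hmax x (List.mem_toFinset.2 ((c.mem_support_rotate_iff m hm).1 hx))
  have hc' := hc.rotate hm
  have hnil := hc'.not_nil
  apply hc'.snd_ne_penultimate
  rw [hparent ((c.rotate m hm).adj_snd hnil).symm (hmax' _ (Walk.getVert_mem_support _ _)),
    hparent ((c.rotate m hm).adj_penultimate hnil) (hmax' _ (Walk.getVert_mem_support _ _))]

end SimpleGraph

namespace KRHolonomy

variable {A S : Type*} [Semigroup S] (θ : FreeMonoid A →* WithOne S)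

noncomputable def parent : CVert θ → CVert θ :=
  Quot.lift
    (fun p => Quot.mk (simRel θ) ⟨(p.val.1 - 1, p.val.2), (Nat.sub_le _ _).trans p.2⟩)
    (fun _ _ h => Quot.sound ⟨congrArg (· - 1) h.1, (Nat.sub_le _ _).trans h.2⟩)

theorem eq_parent_of_adj {v w : CVert θ} (h : (CGraph θ).Adj v w) (hd : depth θ v ≤ depth θ w) :
    v = parent θ w := by
  rw [CGraph, SimpleGraph.fromRel_adj] at h
  rcases h.2 with ⟨k, α, hk, rfl, rfl⟩ | ⟨k, α, hk, rfl, rfl⟩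
  · rfl
  · exact absurd hd (by simp [depth])

theorem reachable_mk_zero (α : FreeMonoid A) :
    ∀ (k : ℕ) (hk : k ≤ ell S), (CGraph θ).Reachable (Quot.mk (simRel θ) ⟨(k, α), hk⟩)
      (Quot.mk (simRel θ) ⟨(0, α), Nat.zero_le _⟩)
  | 0, _ => .rfl
  | k + 1, hk => by
    have hadj : (CGraph θ).Adj (Quot.mk (simRel θ) ⟨(k + 1, α), hk⟩)
        (Quot.mk (simRel θ) ⟨(k, α), Nat.le_of_succ_le hk⟩) := by
      refine (SimpleGraph.fromRel_adj _ _ _).2 ⟨fun h => ?_, Or.inr ⟨k, α, hk, rfl, rfl⟩⟩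
      exact absurd (congrArg (depth θ) h) (by simp [depth])
    exact hadj.reachable.trans (reachable_mk_zero α k _)

theorem mk_zero_eq (α β : FreeMonoid A) :
    Quot.mk (simRel θ) ⟨(0, α), Nat.zero_le _⟩ = Quot.mk (simRel θ) ⟨(0, β), Nat.zero_le _⟩ :=
  Quot.sound ⟨rfl, Nat.zero_le _⟩

theorem chiswell_preconnected : (CGraph θ).Preconnected := by
  rintro ⟨⟨k, α⟩, hk⟩ ⟨⟨k', β⟩, hk'⟩
  exact (reachable_mk_zero θ α k hk).trans
    (mk_zero_eq θ α β ▸ (reachable_mk_zero θ β k' hk').symm)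

end KRHolonomy

open KRHolonomy in
theorem chiswell_isTree_general {A S : Type*} [Semigroup S]
    (θ : FreeMonoid A →* WithOne S) :
    (CGraph θ).IsTree :=
  have : Nonempty (CVert θ) := ⟨Quot.mk _ ⟨(0, 1), Nat.zero_le _⟩⟩
  ⟨⟨chiswell_preconnected θ⟩,
    (CGraph θ).isAcyclic_of_adj_imp_eq_parent (depth θ) (parent θ) fun _ _ => eq_parent_of_adj θ⟩

open KRHolonomy in
/-- The Chiswell graph `𝒞` (with root `[0,1]`) is a tree: it is connected
and admits no cycles. -/
theorem chiswell_isTree {A S : Type*} [Finite A] [Semigroup S] [Finite S]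
    (θ : FreeMonoid A →* WithOne S)
    (hgen : ∀ s : S, ∃ u : FreeMonoid A, θ u = (s : WithOne S))
    (hproper : ∀ u : FreeMonoid A, θ u = 1 → u = 1) :
    (CGraph θ).IsTree :=
  chiswell_isTree_general θ
end

section
/- Let T^1 = KR_right(S,A)^1 for a finite semigroup S generated by a finite alphabet A, let D be the Lyndon–Chiswell length function on T^1, and let ℓ = 2·max{h(s) : s ∈ S^1}. For all α, β ∈ T^1, if D(α, β) ≥ ℓ then α = β. -/
open scoped Classical

/-!
Consecutive transition edges `E_i, E_{i+1}` of a path satisfy `end(E_i) >_J end(E_{i+1})`: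
the source of `E_{i+1}` is `≤_R end(E_i)`, and if `end(E_{i+1})` were `≥_J end(E_i)`, the
stability of the finite monoid `S¹` would yield a path from `end(E_{i+1})` back to the source
of `E_{i+1}`. Hence the heights of the endpoints strictly increase along the transition edges.
So if `α ≠ β` in `T¹`, then either `D(α,β) = 0 < ℓ`, or `D(α,β) ≤ 2·h(end(E_k)) - 1 < ℓ`, or
`E_{k+1}` exists and `D(α,β) = 2·h(end(E_k)) < 2·h(end(E_{k+1})) ≤ ℓ`.
-/

namespace KRHolonomy

section Green

variable {M : Type*} [Monoid M]

lemma leJ_refl (a : M) : leJ a a := ⟨1, 1, by simp⟩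

lemma leJ_trans {a b c : M} (hab : leJ a b) (hbc : leJ b c) : leJ a c := by
  obtain ⟨x, y, rfl⟩ := hab
  obtain ⟨x', y', rfl⟩ := hbc
  exact ⟨x * x', y' * y, by simp only [mul_assoc]⟩

lemma eq_pow_mul_pow_of_eq_mul_mul {s u c : M} (h : s = u * s * c) (n : ℕ) :
    s = u ^ n * s * c ^ n := by
  induction n with
  | zero => simp
  | succ n ih =>
    calc s = u * (u ^ n * s * c ^ n) * c := by rw [← ih, ← h]
      _ = u ^ (n + 1) * s * c ^ (n + 1) := by rw [pow_succ' u, pow_succ c]; simp only [mul_assoc]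

/-- Stability of finite monoids: choosing `m < n` with `c^m = c^n` gives
`s = u^m s c^m = u^m s c^m c^(n-m) = s c^(n-m)`. -/
lemma leR_mul_of_eq_mul_mul [Finite M] {s u c : M} (h : s = u * s * c) : leR s (s * c) := by
  obtain ⟨m, n, hmn, hc⟩ := Finite.exists_ne_map_eq_of_infinite fun k : ℕ => c ^ k
  wlog hlt : m < n generalizing m n
  · exact this n m hmn.symm hc.symm (by omega)
  refine ⟨c ^ (n - m - 1), ?_⟩
  calc s = u ^ m * s * c ^ m := eq_pow_mul_pow_of_eq_mul_mul h m
    _ = u ^ m * s * c ^ m * c ^ (n - m) := by rw [mul_assoc _ (c ^ m), ← pow_add,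
          Nat.add_sub_cancel' hlt.le, ← hc]
    _ = s * c * c ^ (n - m - 1) := by
          rw [← eq_pow_mul_pow_of_eq_mul_mul h m, mul_assoc, ← pow_succ', Nat.sub_add_cancel
            (by omega)]

end Green

section Height

variable {M : Type*} [Monoid M]

/-- `height x` is by definition `sSup (jChainLengths x)`. -/
def jChainLengths (x : M) : Set ℕ :=
  {k | ∃ c : ℕ → M, c k = x ∧ ∀ i < k, ltJ (c (i + 1)) (c i)}

lemma leJ_of_ltJ_chain {k : ℕ} {c : ℕ → M} (hc : ∀ i < k, ltJ (c (i + 1)) (c i)) {i j : ℕ}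
    (hij : i ≤ j) (hjk : j ≤ k) : leJ (c j) (c i) := by
  induction j, hij using Nat.le_induction with
  | base => exact leJ_refl _
  | succ j _ ih => exact leJ_trans (hc j (by omega)).1 (ih (by omega))

lemma lt_card_of_mem_jChainLengths [Finite M] {x : M} {k : ℕ} (hk : k ∈ jChainLengths x) :
    k < Nat.card M := by
  obtain ⟨c, -, hc⟩ := hk
  have hne : ∀ i j : ℕ, i < j → j ≤ k → c i ≠ c j := fun i j hij hjk heq =>
    (hc i (by omega)).2 (heq ▸ leJ_of_ltJ_chain hc hij hjk)
  have hinj : Function.Injective fun i : Fin (k + 1) => c i := by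
    intro i j hij
    by_contra hij'
    rcases Fin.lt_or_lt_of_ne hij' with h | h
    · exact hne i j h (by omega) hij
    · exact hne j i h (by omega) hij.symm
  simpa using Nat.card_le_card_of_injective _ hinj

lemma bddAbove_jChainLengths [Finite M] (x : M) : BddAbove (jChainLengths x) :=
  ⟨Nat.card M, fun _ hk => (lt_card_of_mem_jChainLengths hk).le⟩

lemma height_mem_jChainLengths [Finite M] (x : M) : height x ∈ jChainLengths x :=
  Nat.sSup_mem ⟨0, fun _ => x, rfl, by omega⟩ (bddAbove_jChainLengths x)

lemma height_lt_height_of_ltJ [Finite M] {a b : M} (hba : ltJ b a) : height a < height b := by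
  obtain ⟨c, hca, hc⟩ := height_mem_jChainLengths a
  refine Nat.lt_of_succ_le (le_csSup (bddAbove_jChainLengths b)
    ⟨fun i => if i ≤ height a then c i else b, by simp, fun i hi => ?_⟩)
  rcases Nat.lt_or_ge i (height a) with hi' | hi'
  · simp only [if_pos hi'.le, if_pos (Nat.succ_le_of_lt hi')]
    exact hc i hi'
  · obtain rfl : i = height a := by omega
    simpa [hca] using hba

lemma height_le_sSup_range_height [Finite M] (x : M) :
    height x ≤ sSup (Set.range (height : M → ℕ)) :=
  le_csSup ⟨Nat.card M, by rintro _ ⟨y, rfl⟩; exact (lt_card_of_mem_jChainLengths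
    (height_mem_jChainLengths y)).le⟩ ⟨x, rfl⟩

end Height

section WithOne

variable {S : Type*} [Semigroup S]

instance [Finite S] : Finite (WithOne S) := inferInstanceAs (Finite (Option S))

lemma ltJ_coe_one (s : S) : ltJ (s : WithOne S) 1 := by
  refine ⟨⟨s, 1, by simp⟩, ?_⟩
  rintro ⟨x, y, h⟩
  induction x using WithOne.recOneCoe <;> induction y using WithOne.recOneCoe <;>
    simp [← WithOne.coe_mul] at h

lemma one_le_sSup_range_height [Finite S] [Nonempty S] :
    1 ≤ sSup (Set.range (height : WithOne S → ℕ)) := by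
  obtain ⟨s⟩ := ‹Nonempty S›
  calc 1 ≤ height (s : WithOne S) := Nat.one_le_of_lt (height_lt_height_of_ltJ (ltJ_coe_one s))
    _ ≤ _ := height_le_sSup_range_height _

end WithOne

section TransitionEdges

variable {A S : Type*} [Semigroup S] {θ : FreeMonoid A →* WithOne S}

lemma IsTransitionEdge.ltJ_of_leR [Finite S] (hθ : Function.Surjective θ) {s t : WithOne S}
    {a : A} (he : IsTransitionEdge θ s a) (hst : leR s t) : ltJ (s * θ (FreeMonoid.of a)) t := by
  obtain ⟨x, hx⟩ := hst
  refine ⟨⟨1, x * θ (FreeMonoid.of a), by rw [hx]; simp only [one_mul, mul_assoc]⟩, ?_⟩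
  rintro ⟨p, q, hpq⟩
  have hs : s = p * s * (θ (FreeMonoid.of a) * q * x) := by
    calc s = t * x := hx
      _ = _ := by rw [hpq]; simp only [mul_assoc]
  obtain ⟨z, hz⟩ := leR_mul_of_eq_mul_mul hs
  obtain ⟨w, hw⟩ := hθ (q * x * z)
  refine he ⟨w, ?_⟩
  calc s * θ (FreeMonoid.of a) * θ w = s * (θ (FreeMonoid.of a) * q * x) * z := by
        rw [hw]; simp only [mul_assoc]
    _ = s := hz.symm

lemma isTransitionEdge_and_leR_of_mem_transEdgesFrom {w : List A} {s : WithOne S}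
    {e : WithOne S × A} (he : e ∈ transEdgesFrom θ s w) :
    IsTransitionEdge θ e.1 e.2 ∧ leR e.1 s := by
  induction w generalizing s with
  | nil => simp [transEdgesFrom] at he
  | cons a w ih =>
    rw [transEdgesFrom, List.mem_append] at he
    rcases he with he | he
    · split_ifs at he with hs
      · obtain rfl := List.mem_singleton.1 he
        exact ⟨hs, 1, (mul_one s).symm⟩
      · simp at he
    · obtain ⟨htr, x, hx⟩ := ih he
      exact ⟨htr, θ (FreeMonoid.of a) * x, by rw [hx, mul_assoc]⟩

lemma isChain_transEdgesFrom (w : List A) (s : WithOne S) :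
    (transEdgesFrom θ s w).IsChain fun e e' => leR e'.1 (edgeEnd θ e) := by
  induction w generalizing s with
  | nil => simp [transEdgesFrom]
  | cons a w ih =>
    rw [transEdgesFrom]
    split_ifs with hs
    · refine List.isChain_cons.2 ⟨fun e' he' => ?_, ih _⟩
      exact (isTransitionEdge_and_leR_of_mem_transEdgesFrom (List.mem_of_mem_head? he')).2
    · exact ih _

lemma height_edgeEnd_lt [Finite S] (hθ : Function.Surjective θ) {u : FreeMonoid A} {i : ℕ}
    {e e' : WithOne S × A} (he : (transEdges θ u)[i]? = some e)
    (he' : (transEdges θ u)[i + 1]? = some e') :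
    height (edgeEnd θ e) < height (edgeEnd θ e') := by
  obtain ⟨hi', rfl⟩ := List.getElem?_eq_some_iff.1 he'
  obtain ⟨hi, rfl⟩ := List.getElem?_eq_some_iff.1 he
  have hleR := List.isChain_iff_getElem.1 (isChain_transEdgesFrom _ 1) i hi'
  have htr := (isTransitionEdge_and_leR_of_mem_transEdgesFrom (List.getElem_mem hi')).1
  exact height_lt_height_of_ltJ (htr.ltJ_of_leR hθ hleR)

lemma lcD_lt_ell [Finite S] [Nonempty S] (hθ : Function.Surjective θ) {u v : FreeMonoid A}
    (huv : ¬ KRrel θ u v) : lcD θ u v < ell S := by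
  have hH := one_le_sSup_range_height (S := S)
  have hle : ∀ e, height (edgeEnd θ e) ≤ sSup (Set.range (height : WithOne S → ℕ)) :=
    fun e => height_le_sSup_range_height _
  rw [lcD, if_neg huv, show ell S = 2 * sSup (Set.range (height : WithOne S → ℕ)) from rfl]
  split_ifs with hxi
  · omega
  dsimp only
  split_ifs with hnext
  · obtain ⟨e', -, he', -, -⟩ := hnext
    obtain ⟨i, hi⟩ := Nat.exists_eq_add_one_of_ne_zero hxi
    rw [hi] at he' ⊢
    have hi_lt : i < (transEdges θ u).length := by
      have := (List.getElem?_eq_some_iff.1 he').1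
      omega
    have he := List.getElem?_eq_getElem hi_lt
    simp only [Nat.add_sub_cancel, he, Option.elim_some]
    have hlt := height_edgeEnd_lt hθ he he'
    have hle' := hle e'
    omega
  · rcases (transEdges θ u)[xi θ u v - 1]? with _ | e
    · simp only [Option.elim_none]
      omega
    · have hle' := hle e
      simp only [Option.elim_some]
      omega

end TransitionEdges

end KRHolonomy

open KRHolonomy in
theorem eq_of_lcD_ge_ell_general {A S : Type*} [Semigroup S] [Finite S]
    (θ : FreeMonoid A →* WithOne S)
    (hgen : ∀ s : S, ∃ u : FreeMonoid A, θ u = (s : WithOne S))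
    (hproper : ∀ u : FreeMonoid A, θ u = 1 → u = 1)
    (α β : FreeMonoid A) (h : lcD θ α β ≥ ell S) :
    KRrel θ α β := by
  rcases isEmpty_or_nonempty S with hS | hS
  · exact Or.inl ⟨hproper α (Subsingleton.elim _ _), hproper β (Subsingleton.elim _ _)⟩
  have hθ : Function.Surjective θ := fun t => by
    induction t using WithOne.recOneCoe with
    | one => exact ⟨1, map_one θ⟩
    | coe s => exact hgen s
  by_contra huv
  exact (lcD_lt_ell hθ huv).not_ge h

open KRHolonomy in
/-- For all `α, β ∈ T¹ = KR_right(S,A)¹`, if `D(α,β) ≥ ℓ` then `α = β`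
(in `T¹`). -/
theorem eq_of_lcD_ge_ell {A S : Type*} [Finite A] [Semigroup S] [Finite S]
    (θ : FreeMonoid A →* WithOne S)
    (hgen : ∀ s : S, ∃ u : FreeMonoid A, θ u = (s : WithOne S))
    (hproper : ∀ u : FreeMonoid A, θ u = 1 → u = 1)
    (α β : FreeMonoid A) (h : lcD θ α β ≥ ell S) :
    KRrel θ α β :=
  eq_of_lcD_ge_ell_general θ hgen hproper α β h
end
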